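/- arXiv:1702.00289 — 2 statements merged into one kernel-verified Lean document; each statement's English description precedes it below -/
import Mathlib

section
/- Let (p_n)_{n≥1} be a strictly increasing sequence of positive reals, and N a positive integer. Then ∑_{N < n ≤ 2N} |p_{n+2} − 2p_{n+1} + p_n| / p_n ≤ 2·p_{2N+2} / p_{N+1}. -/
lemma tele13 (f : ℕ → ℝ) : ∀ a b : ℕ, a ≤ b →
    ∑ n ∈ Finset.Ioc a b, (f (n+1) - f n) = f (b+1) - f (a+1) := by
  intro a b hab
  induction b, hab using Nat.le_induction with
  | base => simp
  | succ b hb ih =>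
    rw [Finset.sum_Ioc_succ_top (by omega), ih]
    ring

theorem stmt_13 (p : ℕ → ℝ) (hmono : StrictMono p) (hpos : ∀ n, 0 < p n)
    (N : ℕ) (hN : 1 ≤ N) :
    ∑ n ∈ Finset.Ioc N (2*N), |p (n+2) - 2 * p (n+1) + p n| / p n ≤
      2 * p (2*N + 2) / p (N + 1) := by
  have hmono' := hmono.monotone
  have step : ∀ n ∈ Finset.Ioc N (2*N),
      |p (n+2) - 2 * p (n+1) + p n| / p n ≤ (p (n+2) - p n) / p (N+1) := by
    intro n hn
    rw [Finset.mem_Ioc] at hn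
    have h1 : p n < p (n+1) := hmono (by omega)
    have h2 : p (n+1) < p (n+2) := hmono (by omega)
    have habs : |p (n+2) - 2 * p (n+1) + p n| ≤ p (n+2) - p n := by
      rw [abs_le]; constructor <;> linarith
    exact div_le_div₀ (by linarith) habs (hpos (N+1)) (hmono' (by omega : N+1 ≤ n))
  have hsum := Finset.sum_le_sum step
  refine hsum.trans ?_
  rw [← Finset.sum_div]
  have hNle : N ≤ 2*N := by omega
  have hsplit : ∑ n ∈ Finset.Ioc N (2*N), (p (n+2) - p n)
      = (p (2*N+2) - p (N+2)) + (p (2*N+1) - p (N+1)) := by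
    have e : ∀ n : ℕ, p (n+2) - p n = (p (n+2) - p (n+1)) + (p (n+1) - p n) := by
      intro n; ring
    simp_rw [e]
    rw [Finset.sum_add_distrib, tele13 (fun n => p (n+1)) N (2*N) hNle,
      tele13 p N (2*N) hNle]
  rw [hsplit]
  have h3 : p (2*N+1) < p (2*N+2) := hmono (by omega)
  have h4 : 0 < p (N+2) := hpos _
  have h5 : 0 < p (N+1) := hpos _
  exact div_le_div_of_nonneg_right (by linarith) h5.le
end

section
/- Let (p_n)_{n≥1} be a strictly increasing sequence of positive reals such that p_{2m}/p_m ≤ A for all m ≥ M. Then for all N ≥ M, ∑_{N < n ≤ 2N} |p_{n+2} − 2p_{n+1} + p_n| / p_n ≤ 2A. -/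
lemma tele_aux (f : ℕ → ℝ) (a b : ℕ) (h : a ≤ b) :
    ∑ n ∈ Finset.Ioc a b, (f (n+1) - f n) = f (b+1) - f (a+1) := by
  induction b with
  | zero => interval_cases a; simp
  | succ b ih =>
    rcases Nat.lt_or_ge a (b+1) with h' | h'
    · rw [Finset.sum_Ioc_succ_top (by omega), ih (by omega)]; ring
    · have : a = b+1 := le_antisymm h h'
      subst this; simp

theorem stmt_14 (p : ℕ → ℝ) (hmono : StrictMono p) (hpos : ∀ n, 0 < p n)
    (A : ℝ) (hA : 0 < A) (M : ℕ) (hdbl : ∀ m, M ≤ m → p (2*m) / p m ≤ A)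
    (N : ℕ) (hN : M ≤ N) (hN1 : 1 ≤ N) :
    ∑ n ∈ Finset.Ioc N (2*N), |p (n+2) - 2 * p (n+1) + p n| / p n ≤ 2 * A := by
  have hQ : 0 < p (N+1) := hpos _
  have hstep : ∀ n ∈ Finset.Ioc N (2*N),
      |p (n+2) - 2 * p (n+1) + p n| / p n
        ≤ ((p (n+2) - p (n+1)) + (p (n+1) - p n)) / p (N+1) := by
    intro n hn
    simp only [Finset.mem_Ioc] at hn
    have h1 : p (n+1) ≤ p (n+2) := le_of_lt (hmono (by omega))
    have h2 : p n ≤ p (n+1) := le_of_lt (hmono (by omega))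
    have hQn : p (N+1) ≤ p n := (hmono.le_iff_le).2 (by omega)
    have habs : |p (n+2) - 2 * p (n+1) + p n|
        ≤ (p (n+2) - p (n+1)) + (p (n+1) - p n) := by
      have : p (n+2) - 2 * p (n+1) + p n
          = (p (n+2) - p (n+1)) - (p (n+1) - p n) := by ring
      rw [this]
      calc |(p (n+2) - p (n+1)) - (p (n+1) - p n)|
          ≤ |p (n+2) - p (n+1)| + |p (n+1) - p n| := abs_sub _ _
        _ = (p (n+2) - p (n+1)) + (p (n+1) - p n) := by
            rw [abs_of_nonneg (by linarith), abs_of_nonneg (by linarith)]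
    exact div_le_div₀ (by linarith) habs hQ hQn
  calc ∑ n ∈ Finset.Ioc N (2*N), |p (n+2) - 2 * p (n+1) + p n| / p n
      ≤ ∑ n ∈ Finset.Ioc N (2*N),
          ((p (n+2) - p (n+1)) + (p (n+1) - p n)) / p (N+1) :=
        Finset.sum_le_sum hstep
    _ = ((∑ n ∈ Finset.Ioc N (2*N), (p (n+2) - p (n+1)))
        + (∑ n ∈ Finset.Ioc N (2*N), (p (n+1) - p n))) / p (N+1) := by
        rw [← Finset.sum_add_distrib, Finset.sum_div]
    _ = ((p (2*N+2) - p (N+2)) + (p (2*N+1) - p (N+1))) / p (N+1) := by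
        have hNle : N ≤ 2*N := by omega
        have t1 := tele_aux (fun n => p (n+1)) N (2*N) hNle
        have t2 := tele_aux p N (2*N) hNle
        rw [t1, t2]
    _ ≤ 2 * A := by
        have hd : p (2*(N+1)) / p (N+1) ≤ A := hdbl (N+1) (by omega)
        have hd' : p (2*(N+1)) ≤ A * p (N+1) := by
          rwa [div_le_iff₀ hQ] at hd
        have e1 : 2*(N+1) = 2*N+2 := by ring
        rw [e1] at hd'
        have h3 : p (2*N+1) ≤ p (2*N+2) := le_of_lt (hmono (by omega))
        have h4 : p (N+1) ≤ p (N+2) := le_of_lt (hmono (by omega))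
        rw [div_le_iff₀ hQ]
        nlinarith [hQ, hA]
end
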